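/- In the cut-vertex setup, assume H̄ satisfies the bunkbed conjecture and let μ be a symmetric weight on F. Then for every y ∈ V(H̄), P_{H₀,μ}(v⁻ ∼_{H₀} y⁻) ≥ P_{H₀,μ}(v⁻ ∼_{H₀} y⁺). -/

import Mathlib

open Classical

noncomputable def edgeFin {V : Type*} [Fintype V] (G : SimpleGraph V) : Finset (Sym2 V) :=
  G.edgeSet.toFinset

noncomputable def percWeight {V : Type*} [Fintype V] (G : SimpleGraph V)
    (μ : Sym2 V → ℝ) (K : Finset (Sym2 V)) : ℝ :=
  (∏ e ∈ K, μ e) * ∏ e ∈ edgeFin G \ K, (1 - μ e)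

noncomputable def percProb {V : Type*} [Fintype V] (G : SimpleGraph V)
    (μ : Sym2 V → ℝ) (A : Finset (Sym2 V) → Prop) : ℝ :=
  ∑ K ∈ (edgeFin G).powerset, if A K then percWeight G μ K else 0

def ConnIn {V : Type*} (K : Finset (Sym2 V)) (x y : V) : Prop :=
  (SimpleGraph.fromEdgeSet (↑K : Set (Sym2 V))).Reachable x y

def IsWeight {V : Type*} (G : SimpleGraph V) (μ : Sym2 V → ℝ) : Prop :=
  ∀ e ∈ G.edgeSet, 0 ≤ μ e ∧ μ e ≤ 1

def BB {V : Type*} (G : SimpleGraph V) : SimpleGraph (V × Bool) :=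
  G.boxProd ⊤

def IsSymWeight {V : Type*} (G : SimpleGraph V) (μ : Sym2 (V × Bool) → ℝ) : Prop :=
  ∀ x y : V, G.Adj x y →
    μ s((x, false), (y, false)) = μ s((x, true), (y, true))

def SatisfiesBunkbed {V : Type*} [Fintype V] (G : SimpleGraph V) : Prop :=
  ∀ μ : Sym2 (V × Bool) → ℝ, IsWeight (BB G) μ → IsSymWeight G μ →
    ∀ x y : V,
      percProb (BB G) μ (fun K => ConnIn K (x, false) (y, true)) ≤
        percProb (BB G) μ (fun K => ConnIn K (x, false) (y, false))

def restrict {V : Type*} (G : SimpleGraph V) (S : Set V) : SimpleGraph V where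
  Adj x y := G.Adj x y ∧ x ∈ S ∧ y ∈ S
  symm := ⟨fun x y h => ⟨h.1.symm, h.2.2, h.2.1⟩⟩
  loopless := ⟨fun x h => G.irrefl h.1⟩

def IsCutVertex {V : Type*} (G : SimpleGraph V) (v : V) : Prop :=
  ∃ x y : ({u | u ≠ v} : Set V),
    G.Reachable x.1 y.1 ∧ ¬ (G.induce {u | u ≠ v}).Reachable x y

/-- The copy of `BB (F̄[S])` sitting inside `BB F̄` (as a spanning subgraph on `V × Bool`):
its edges are the two horizontal copies of the edges of `F̄` inside `S`, together with the
vertical edges at the vertices of `S`. -/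
def bbSide {V : Type*} (Fbar : SimpleGraph V) (S : Set V) : SimpleGraph (V × Bool) :=
  restrict (BB Fbar) {p : V × Bool | p.1 ∈ S}

/-- `H₀`: the graph `H = BB (F̄[T])` with the vertical edge `v⁻v⁺` deleted. -/
def bbSideDel {V : Type*} (Fbar : SimpleGraph V) (T : Set V) (v : V) :
    SimpleGraph (V × Bool) :=
  (bbSide Fbar T).deleteEdges {s((v, false), (v, true))}

-- generic lemmas
section Generic
variable {α β : Type*}

/-- Sym2 embedding from an embedding. -/
def sym2Emb (f : α ↪ β) : Sym2 α ↪ Sym2 β :=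
  ⟨Sym2.map f, Sym2.map.injective f.injective⟩

lemma percProb_congr_weight {V : Type*} [Fintype V] (G : SimpleGraph V)
    {μ ν : Sym2 V → ℝ} (h : ∀ e ∈ edgeFin G, μ e = ν e) (A : Finset (Sym2 V) → Prop) :
    percProb G μ A = percProb G ν A := by
  unfold percProb
  refine Finset.sum_congr rfl fun K hK => ?_
  rw [Finset.mem_powerset] at hK
  congr 1
  unfold percWeight
  refine congrArg₂ (· * ·) ?_ ?_
  · exact Finset.prod_congr rfl fun e he => h e (hK he)
  · exact Finset.prod_congr rfl fun e he => by rw [h e (Finset.mem_sdiff.1 he).1]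

lemma percProb_congr_event {V : Type*} [Fintype V] (G : SimpleGraph V)
    (μ : Sym2 V → ℝ) {A B : Finset (Sym2 V) → Prop} (h : ∀ K, A K ↔ B K) :
    percProb G μ A = percProb G μ B := by
  unfold percProb
  exact Finset.sum_congr rfl fun K _ => by rw [if_congr (h K) rfl rfl]

lemma percProb_deleteEdge {V : Type*} [Fintype V] (G : SimpleGraph V)
    (e : Sym2 V) (he : e ∈ G.edgeSet) (μ : Sym2 V → ℝ) (hμe : μ e = 0)
    (A : Finset (Sym2 V) → Prop) :
    percProb (G.deleteEdges {e}) μ A = percProb G μ A := by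
  have hEdel : edgeFin (G.deleteEdges {e}) = (edgeFin G).erase e := by
    simp only [edgeFin, SimpleGraph.edgeSet_deleteEdges, Set.toFinset_diff,
      Set.toFinset_singleton, Finset.sdiff_singleton_eq_erase]
  have heF : e ∈ edgeFin G := by simpa [edgeFin] using he
  have hins : edgeFin G = insert e ((edgeFin G).erase e) := (Finset.insert_erase heF).symm
  have hnm : e ∉ (edgeFin G).erase e := Finset.notMem_erase e _
  unfold percProb
  rw [hEdel]
  conv_rhs => rw [hins]
  rw [Finset.sum_powerset_insert hnm]
  have h2 : ∀ K ∈ ((edgeFin G).erase e).powerset,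
      (if A (insert e K) then percWeight G μ (insert e K) else 0) = 0 := by
    intro K _
    have : percWeight G μ (insert e K) = 0 := by
      unfold percWeight
      rw [Finset.prod_eq_zero (Finset.mem_insert_self e K) hμe, zero_mul]
    rw [this]; simp
  rw [Finset.sum_congr rfl h2, Finset.sum_const_zero, add_zero]
  refine Finset.sum_congr rfl fun K hK => ?_
  rw [Finset.mem_powerset] at hK
  have heK : e ∉ K := fun h => hnm (hK h)
  congr 1
  unfold percWeight
  congr 1
  rw [hEdel]
  conv_rhs => rw [hins]
  rw [Finset.insert_sdiff_of_notMem _ heK,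
    Finset.prod_insert (fun h => hnm (Finset.mem_sdiff.1 h).1), hμe, sub_zero, one_mul]

end Generic

section Gen2
variable {α β : Type*} (f : α ↪ β)

lemma myPowersetMap (s : Finset α) :
    (s.map f).powerset = s.powerset.map ⟨Finset.map f, Finset.map_injective f⟩ := by
  classical
  ext t
  simp only [Finset.mem_powerset, Finset.mem_map, Function.Embedding.coeFn_mk]
  constructor
  · intro ht
    refine ⟨s.filter (fun a => f a ∈ t), Finset.filter_subset _ _, ?_⟩
    ext b
    simp only [Finset.mem_map, Finset.mem_filter]
    constructor
    · rintro ⟨a, ⟨_, hb⟩, rfl⟩; exact hb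
    · intro hb
      obtain ⟨a, ha, rfl⟩ := Finset.mem_map.1 (ht hb)
      exact ⟨a, ⟨ha, hb⟩, rfl⟩
  · rintro ⟨u, hu, rfl⟩
    exact Finset.map_subset_map.2 hu

lemma myMapSdiff (s t : Finset α) : (s \ t).map f = s.map f \ t.map f := by
  classical
  simp only [Finset.map_eq_image]
  exact Finset.image_sdiff s t f.injective

end Gen2

section Gen3
variable {α β : Type*} [Fintype α] [Fintype β] (f : α ↪ β)

lemma edgeFin_map (G : SimpleGraph α) :
    edgeFin (G.map f) = (edgeFin G).map (sym2Emb f) := by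
  ext e
  induction e with
  | _ p q =>
    simp only [edgeFin, Set.mem_toFinset, Finset.mem_map, SimpleGraph.mem_edgeSet,
      SimpleGraph.map_adj, sym2Emb, Function.Embedding.coeFn_mk]
    constructor
    · rintro ⟨a, b, hab, rfl, rfl⟩
      exact ⟨s(a, b), hab, Sym2.map_pair_eq f a b⟩
    · rintro ⟨e', he', hme⟩
      induction e' with
      | _ a b =>
        rw [Sym2.map_pair_eq] at hme
        rcases Sym2.eq_iff.1 hme with ⟨rfl, rfl⟩ | ⟨rfl, rfl⟩
        · exact ⟨a, b, he', rfl, rfl⟩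
        · exact ⟨b, a, he'.symm, rfl, rfl⟩

lemma percProb_map (G : SimpleGraph α) (μ : Sym2 β → ℝ) (A : Finset (Sym2 β) → Prop) :
    percProb (G.map f) μ A
      = percProb G (fun e => μ (Sym2.map f e)) (fun K => A (K.map (sym2Emb f))) := by
  unfold percProb
  rw [edgeFin_map f G, myPowersetMap, Finset.sum_map]
  refine Finset.sum_congr rfl fun K hK => ?_
  simp only [Function.Embedding.coeFn_mk]
  congr 1
  unfold percWeight
  rw [edgeFin_map f G]
  have hsd : Finset.map (sym2Emb f) (edgeFin G) \ Finset.map (sym2Emb f) K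
      = (edgeFin G \ K).map (sym2Emb f) := by
    ext e
    simp only [Finset.mem_sdiff, Finset.mem_map]
    constructor
    · rintro ⟨⟨e', he', rfl⟩, h2⟩
      exact ⟨e', ⟨he', fun hk => h2 ⟨e', hk, rfl⟩⟩, rfl⟩
    · rintro ⟨e', ⟨he', hk⟩, rfl⟩
      refine ⟨⟨e', he', rfl⟩, ?_⟩
      rintro ⟨e'', hk'', heq⟩
      exact hk ((sym2Emb f).injective heq ▸ hk'')
  rw [hsd, Finset.prod_map, Finset.prod_map]
  rfl

lemma connIn_map (K : Finset (Sym2 α)) (x y : α) :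
    ConnIn (K.map (sym2Emb f)) (f x) (f y) ↔ ConnIn K x y := by
  have hGeq : SimpleGraph.fromEdgeSet (↑(K.map (sym2Emb f)) : Set (Sym2 β))
      = (SimpleGraph.fromEdgeSet (↑K : Set (Sym2 α))).map f := by
    ext a b
    simp only [SimpleGraph.fromEdgeSet_adj, Finset.coe_map, Set.mem_image, Finset.mem_coe,
      SimpleGraph.map_adj, sym2Emb, Function.Embedding.coeFn_mk]
    constructor
    · rintro ⟨⟨e, he, hme⟩, hne⟩
      induction e with
      | _ u w =>
        rw [Sym2.map_pair_eq] at hme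
        rcases Sym2.eq_iff.1 hme with ⟨rfl, rfl⟩ | ⟨rfl, rfl⟩
        · exact ⟨u, w, ⟨he, fun h => hne (by rw [h])⟩, rfl, rfl⟩
        · exact ⟨w, u, ⟨(Sym2.eq_swap ▸ he), fun h => hne (by rw [h])⟩, rfl, rfl⟩
    · rintro ⟨u, w, ⟨he, hne⟩, rfl, rfl⟩
      exact ⟨⟨s(u, w), he, Sym2.map_pair_eq f u w⟩, fun h => hne (f.injective h)⟩
  unfold ConnIn
  rw [hGeq]
  constructor
  · intro h
    obtain ⟨w⟩ := h
    -- walk induction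
    have key : ∀ {p q : β}
        (_ : ((SimpleGraph.fromEdgeSet (↑K : Set (Sym2 α))).map f).Walk p q) {a : α},
        f a = p → ∃ c : α, f c = q ∧ (SimpleGraph.fromEdgeSet (↑K : Set (Sym2 α))).Reachable a c := by
      intro p q w
      induction w with
      | nil => exact fun {a} ha => ⟨a, ha, SimpleGraph.Reachable.refl a⟩
      | cons h _ ih =>
        intro a ha
        rw [SimpleGraph.map_adj] at h
        obtain ⟨u, w', huw, hu, hw⟩ := h
        subst ha
        obtain rfl : a = u := f.injective hu.symm
        obtain ⟨c, hc, hr⟩ := ih hw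
        exact ⟨c, hc, (SimpleGraph.Adj.reachable huw).trans hr⟩
    obtain ⟨c, hc, hr⟩ := key w rfl
    obtain rfl : c = y := f.injective hc
    exact hr
  · intro h
    exact h.map ⟨f, fun {a b} hab => SimpleGraph.map_adj f _ _ _ |>.2 ⟨a, b, hab, rfl, rfl⟩⟩

end Gen3

-- specific aux material
def tEmb {V : Type*} (T : Set V) : (↥T × Bool) ↪ (V × Bool) :=
  ⟨fun p => (p.1.1, p.2), by
    rintro ⟨⟨a, ha⟩, ba⟩ ⟨⟨b, hb⟩, bb⟩ h
    simp only [Prod.mk.injEq] at h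
    exact Prod.ext (Subtype.ext h.1) h.2⟩

noncomputable def muZero {V : Type*} (v : V) (μ : Sym2 (V × Bool) → ℝ) :
    Sym2 (V × Bool) → ℝ :=
  fun e => if e = s((v, false), (v, true)) then 0 else μ e

lemma bbSide_eq_map {V : Type*} (Fbar : SimpleGraph V) (T : Set V) :
    (BB (Fbar.induce T)).map (tEmb T) = bbSide Fbar T := by
  ext p q
  rw [SimpleGraph.map_adj]
  constructor
  · rintro ⟨⟨⟨a, ha⟩, ba⟩, ⟨⟨b, hb⟩, bb⟩, hadj, rfl, rfl⟩
    rcases hadj with ⟨h1, h2⟩ | ⟨h1, h2⟩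
    · exact ⟨Or.inl ⟨h1, h2⟩, ha, hb⟩
    · have hab : a = b := congrArg Subtype.val h2
      exact ⟨Or.inr ⟨h1, hab⟩, ha, hb⟩
  · rintro ⟨hadj, hp, hq⟩
    refine ⟨(⟨p.1, hp⟩, p.2), (⟨q.1, hq⟩, q.2), ?_, rfl, rfl⟩
    rcases hadj with ⟨h1, h2⟩ | ⟨h1, h2⟩
    · exact Or.inl ⟨h1, h2⟩
    · exact Or.inr ⟨h1, Subtype.ext h2⟩

lemma bb_adj_of_induce {V : Type*} (Fbar : SimpleGraph V) (T : Set V)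
    {a b : ↥T × Bool} (h : (BB (Fbar.induce T)).Adj a b) :
    (BB Fbar).Adj (tEmb T a) (tEmb T b) := by
  have : (bbSide Fbar T).Adj (tEmb T a) (tEmb T b) := by
    rw [← bbSide_eq_map]
    exact (SimpleGraph.map_adj _ _ _ _).2 ⟨a, b, h, rfl, rfl⟩
  exact this.1

/-- If H̄ satisfies the bunkbed conjecture then the bunkbed inequality from v holds in H₀
for every symmetric weight on F. -/
theorem bunkbed_ineq_in_H0 {V : Type*} [Fintype V]
    (Fbar : SimpleGraph V) (v : V) (S T : Set V)
    (hcut : IsCutVertex Fbar v)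
    (hST : S ∩ T = {v}) (hUnion : S ∪ T = Set.univ)
    (hSep : ∀ x ∈ S, ∀ y ∈ T, Fbar.Adj x y → x = v ∨ y = v)
    (hH : SatisfiesBunkbed (Fbar.induce T))
    (μ : Sym2 (V × Bool) → ℝ) (hμ : IsWeight (BB Fbar) μ) (hsym : IsSymWeight Fbar μ)
    (y : V) (hy : y ∈ T) :
    percProb (bbSideDel Fbar T v) μ (fun K => ConnIn K (v, false) (y, false)) ≥
      percProb (bbSideDel Fbar T v) μ (fun K => ConnIn K (v, false) (y, true)) := by
  classical
  have hv : v ∈ T := by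
    have : v ∈ S ∩ T := hST.symm ▸ Set.mem_singleton v
    exact this.2
  set ι : (↥T × Bool) ↪ (V × Bool) := tEmb T with hι
  set ν : Sym2 (V × Bool) → ℝ := muZero v μ with hν
  set μ' : Sym2 (↥T × Bool) → ℝ := fun e => ν (Sym2.map ι e) with hμ'
  -- the vertical edge at v
  set vert : Sym2 (V × Bool) := s((v, false), (v, true)) with hvert
  have hvmem : vert ∈ (bbSide Fbar T).edgeSet := by
    refine ⟨Or.inr ⟨by simp, rfl⟩, hv, hv⟩
  have hνvert : ν vert = 0 := by simp [hν, muZero, hvert]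
  -- key transfer equality
  have hkey : ∀ b : Bool,
      percProb (bbSideDel Fbar T v) μ (fun K => ConnIn K (v, false) (y, b))
        = percProb (BB (Fbar.induce T)) μ'
            (fun K => ConnIn K (⟨v, hv⟩, false) (⟨y, hy⟩, b)) := by
    intro b
    have h1 : percProb (bbSideDel Fbar T v) μ (fun K => ConnIn K (v, false) (y, b))
        = percProb (bbSideDel Fbar T v) ν (fun K => ConnIn K (v, false) (y, b)) := by
      refine percProb_congr_weight _ (fun e he => ?_) _
      have : e ∈ (bbSideDel Fbar T v).edgeSet := by simpa [edgeFin] using he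
      rw [bbSideDel, SimpleGraph.edgeSet_deleteEdges] at this
      have hne : e ≠ vert := fun h => this.2 (by simp [h, hvert])
      simp only [hν, muZero]
      rw [if_neg hne]
    have h2 : percProb (bbSideDel Fbar T v) ν (fun K => ConnIn K (v, false) (y, b))
        = percProb (bbSide Fbar T) ν (fun K => ConnIn K (v, false) (y, b)) :=
      percProb_deleteEdge (bbSide Fbar T) vert hvmem ν hνvert _
    have h3 : percProb (bbSide Fbar T) ν (fun K => ConnIn K (v, false) (y, b))
        = percProb ((BB (Fbar.induce T)).map ι) ν
            (fun K => ConnIn K (v, false) (y, b)) := by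
      rw [bbSide_eq_map]
    have h4 := percProb_map ι (BB (Fbar.induce T)) ν
      (fun K => ConnIn K (v, false) (y, b))
    have h5 : percProb (BB (Fbar.induce T)) (fun e => ν (Sym2.map ι e))
          (fun K => ConnIn (K.map (sym2Emb ι)) (v, false) (y, b))
        = percProb (BB (Fbar.induce T)) μ'
            (fun K => ConnIn K (⟨v, hv⟩, false) (⟨y, hy⟩, b)) := by
      refine percProb_congr_event _ _ (fun K => ?_)
      exact connIn_map ι K (⟨v, hv⟩, false) (⟨y, hy⟩, b)
    rw [h1, h2, h3, h4, h5]
  -- μ' is a weight on BB (induce T)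
  have hw' : IsWeight (BB (Fbar.induce T)) μ' := by
    intro e he
    induction e with
    | _ a c =>
      by_cases hve : Sym2.map ι s(a, c) = vert
      · simp only [hμ', hν, muZero, hvert] at *
        rw [if_pos hve]
        norm_num
      · have hadj : (BB (Fbar.induce T)).Adj a c := he
        have : Sym2.map ι s(a, c) ∈ (BB Fbar).edgeSet := by
          rw [Sym2.map_pair_eq]
          exact bb_adj_of_induce Fbar T hadj
        have hb := hμ _ this
        simpa only [hμ', hν, muZero, ← hvert, if_neg hve] using hb
  -- μ' is a symmetric weight on induce T
  have hsym' : IsSymWeight (Fbar.induce T) μ' := by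
    intro x z hadj
    have hF : Fbar.Adj x.1 z.1 := hadj
    have h1 : Sym2.map ι s((x, false), (z, false)) = s((x.1, false), (z.1, false)) := by
      rw [Sym2.map_pair_eq]; rfl
    have h2 : Sym2.map ι s((x, true), (z, true)) = s((x.1, true), (z.1, true)) := by
      rw [Sym2.map_pair_eq]; rfl
    have hne1 : s(((x.1 : V), false), ((z.1 : V), false)) ≠ vert := by
      rw [hvert]; simp [Sym2.eq_iff, Prod.ext_iff]
    have hne2 : s(((x.1 : V), true), ((z.1 : V), true)) ≠ vert := by
      rw [hvert]; simp [Sym2.eq_iff, Prod.ext_iff]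
    simp only [hμ', hν, muZero, h1, h2, ← hvert, if_neg hne1, if_neg hne2]
    exact hsym x.1 z.1 hF
  rw [ge_iff_le, hkey true, hkey false]
  exact hH μ' hw' hsym' ⟨v, hv⟩ ⟨y, hy⟩
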